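/- arXiv:2211.15917 — 2 statements merged into one kernel-verified Lean document; each statement's English description precedes it below -/
import Mathlib

section
/- Let S be a skeleton with head e and periphery S₀. If u, v ∈ S₀ satisfy αe + βu = γe + δv with α, γ ∈ ℝ and β, δ ≥ 0, then α = γ, and either β = δ = 0 or u = v. -/
open Set

/-- A *skeleton* with head `e` in a real vector space `X`. -/
structure IsSkeleton {X : Type*} [AddCommGroup X] [Module ℝ X] (S : Set X) (e : X) : Prop where
  head_ne : e ≠ 0
  zero_mem : (0 : X) ∈ S
  head_mem : e ∈ S
  compl_mem : ∀ u ∈ S, e - u ∈ S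
  comb : ∀ u ∈ S, ∀ v ∈ S, ∀ l : ℝ, 0 ≤ l → l ≤ 1 →
    ∃ w ∈ S \ {0, e}, ∃ a b : ℝ, 0 ≤ a ∧ 0 ≤ b ∧
      l • u + (1 - l) • v = a • e + b • w
  head_sum : ∀ n : ℕ, 2 ≤ n → ∀ u : Fin n → X, ∀ a : Fin n → ℝ,
    (∀ i, u i ∈ S \ {0, e}) → (∀ i, 0 < a i) →
    e = ∑ i, a i • u i → ∀ j, 1 ≤ ∑ i ∈ Finset.univ.erase j, a i


/-!
Write `S₀ = S \ {0, e}`. The only way `e` enters a relation `v = p • e + q • u` between peripheral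
points with `q > 0` is with `p = 0`: if `p > 0`, then `e` is a positive combination of `v` and
`e - u`, and axiom (3) forces the coefficient `q / (p + q)` of `e - u` to be at least `1`, which is
absurd; exchanging `u` and `v` gives `p ≥ 0`. Applying this once more to `e - v = (1 - q) • e +
q • (e - u)` gives `q = 1`. The same argument shows that no multiple of `e` is peripheral, which
disposes of the cases where one of `b`, `d` vanishes.
-/

lemma eq_smul_add_smul_of_add_eq {X : Type*} [AddCommGroup X] [Module ℝ X] {e u v : X}
    {a b c d : ℝ} (hd : d ≠ 0) (h : a • e + b • u = c • e + d • v) :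
    v = ((a - c) / d) • e + (b / d) • u := by
  apply smul_right_injective X hd
  simp only [smul_add, smul_smul, mul_div_cancel₀ _ hd, sub_smul]
  rw [sub_add_eq_add_sub, h]
  abel

namespace IsSkeleton

variable {X : Type*} [AddCommGroup X] [Module ℝ X] {S : Set X} {e : X}

lemma sub_mem_periphery (h : IsSkeleton S e) {u : X} (hu : u ∈ S \ {0, e}) :
    e - u ∈ S \ {0, e} := by
  obtain ⟨huS, hu0, hue⟩ : u ∈ S ∧ u ≠ 0 ∧ u ≠ e := by simpa using hu
  simp only [mem_sdiff, mem_insert_iff, mem_singleton_iff, not_or, sub_eq_zero, sub_eq_self]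
  exact ⟨h.compl_mem u huS, hue.symm, hu0⟩

lemma one_le_of_head_eq_add (h : IsSkeleton S e) {x y : X} (hx : x ∈ S \ {0, e})
    (hy : y ∈ S \ {0, e}) {α β : ℝ} (hα : 0 < α) (hβ : 0 < β) (he : e = α • x + β • y) :
    1 ≤ β := by
  have hmem : ∀ i, ![x, y] i ∈ S \ {0, e} := Fin.forall_fin_two.mpr ⟨hx, hy⟩
  have hpos : ∀ i, 0 < ![α, β] i := Fin.forall_fin_two.mpr ⟨hα, hβ⟩
  have key := h.head_sum 2 le_rfl _ _ hmem hpos (by simpa [Fin.sum_univ_two] using he) 0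
  simpa [show Finset.univ.erase (0 : Fin 2) = {1} by decide] using key

lemma nonpos_of_eq_smul_add (h : IsSkeleton S e) {u v : X} (hu : u ∈ S \ {0, e})
    (hv : v ∈ S \ {0, e}) {p q : ℝ} (hq : 0 < q) (hrel : v = p • e + q • u) : p ≤ 0 := by
  by_contra! hp
  have hpq : 0 < p + q := by linarith
  have he : e = (p + q)⁻¹ • v + (q / (p + q)) • (e - u) := by
    rw [hrel]
    match_scalars <;> field_simp
    ring
  have := h.one_le_of_head_eq_add hv (h.sub_mem_periphery hu) (by positivity) (by positivity) he
  rw [one_le_div hpq] at this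
  linarith

lemma eq_zero_of_eq_smul_add (h : IsSkeleton S e) {u v : X} (hu : u ∈ S \ {0, e})
    (hv : v ∈ S \ {0, e}) {p q : ℝ} (hq : 0 < q) (hrel : v = p • e + q • u) : p = 0 := by
  have hu_eq : u = (-p / q) • e + q⁻¹ • v := by
    rw [hrel]
    match_scalars <;> field_simp
    ring
  have hp_nonneg : 0 ≤ p := by
    have := h.nonpos_of_eq_smul_add hv hu (inv_pos.mpr hq) hu_eq
    rwa [neg_div, neg_nonpos, le_div_iff₀ hq, zero_mul] at this
  exact le_antisymm (h.nonpos_of_eq_smul_add hu hv hq hrel) hp_nonneg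

lemma eq_of_eq_smul_add (h : IsSkeleton S e) {u v : X} (hu : u ∈ S \ {0, e})
    (hv : v ∈ S \ {0, e}) {p q : ℝ} (hq : 0 < q) (hrel : v = p • e + q • u) : p = 0 ∧ v = u := by
  have hp := h.eq_zero_of_eq_smul_add hu hv hq hrel
  have hq_one : 1 - q = 0 := by
    refine h.eq_zero_of_eq_smul_add (h.sub_mem_periphery hu) (h.sub_mem_periphery hv) hq ?_
    rw [hrel, hp]
    module
  refine ⟨hp, ?_⟩
  rw [hrel, hp, show q = 1 by linarith, zero_smul, zero_add, one_smul]

lemma smul_head_notMem_periphery (h : IsSkeleton S e) (s : ℝ) : s • e ∉ S \ {0, e} := by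
  intro hs
  have h_half_nonpos : s / 2 ≤ 0 :=
    h.nonpos_of_eq_smul_add hs hs (by norm_num : (0 : ℝ) < 1 / 2) (by module)
  have h_one_sub_nonpos : (1 - s) / 2 ≤ 0 :=
    h.nonpos_of_eq_smul_add (h.sub_mem_periphery hs) (h.sub_mem_periphery hs)
      (by norm_num : (0 : ℝ) < 1 / 2) (by module)
  linarith

end IsSkeleton

theorem skeleton_unique_representation
    {X : Type*} [AddCommGroup X] [Module ℝ X] {S : Set X} {e : X}
    (h : IsSkeleton S e) {u v : X} (hu : u ∈ S \ {0, e}) (hv : v ∈ S \ {0, e})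
    {a b c d : ℝ} (hb : 0 ≤ b) (hd : 0 ≤ d)
    (heq : a • e + b • u = c • e + d • v) :
    a = c ∧ ((b = 0 ∧ d = 0) ∨ u = v) := by
  rcases hd.eq_or_lt with rfl | hd
  · rcases hb.eq_or_lt with rfl | hb
    · simp only [zero_smul, add_zero] at heq
      exact ⟨smul_left_injective ℝ h.head_ne heq, .inl ⟨rfl, rfl⟩⟩
    · have hu_eq := eq_smul_add_smul_of_add_eq hb.ne' heq.symm
      rw [zero_div, zero_smul, add_zero] at hu_eq
      exact (h.smul_head_notMem_periphery _ (hu_eq ▸ hu)).elim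
  have hv_eq := eq_smul_add_smul_of_add_eq hd.ne' heq
  rcases hb.eq_or_lt with rfl | hb
  · rw [zero_div, zero_smul, add_zero] at hv_eq
    exact (h.smul_head_notMem_periphery _ (hv_eq ▸ hv)).elim
  obtain ⟨hac, hvu⟩ := h.eq_of_eq_smul_add hu hv (div_pos hb hd) hv_eq
  rw [div_eq_zero_iff, sub_eq_zero] at hac
  exact ⟨hac.resolve_right hd.ne', .inr hvu.symm⟩
end

section
/- Let (V, e) be an order unit space of dimension at least 2, and let u ∈ V⁺ with ‖u‖ = 1 and u ≠ e. Then there exists a unique element ū on the line L(u) = {e − λ(e − u) : λ ∈ ℝ} such that ū ∈ V⁺, ‖ū‖ = 1, e − ū ∈ V⁺, and ‖e − ū‖ = 1; explicitly, ū = e − ‖e − u‖⁻¹(e − u). -/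
open Set

/-- `C` is the positive cone of an order unit space structure on `V` with order unit `e`:
a proper, Archimedean cone for which `e` is an order unit. -/
structure IsOrderUnitSpace {V : Type*} [AddCommGroup V] [Module ℝ V]
    (C : Set V) (e : V) : Prop where
  zero_mem : (0 : V) ∈ C
  add_mem : ∀ u ∈ C, ∀ v ∈ C, u + v ∈ C
  smul_mem : ∀ r : ℝ, 0 ≤ r → ∀ v ∈ C, r • v ∈ C
  proper : ∀ v ∈ C, -v ∈ C → v = 0
  arch : ∀ v : V, (∀ ε : ℝ, 0 < ε → ε • e + v ∈ C) → v ∈ C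
  unit : ∀ v : V, ∃ a : ℝ, 0 < a ∧ a • e - v ∈ C ∧ a • e + v ∈ C

/-- The order unit norm `‖v‖ = inf {a > 0 : a • e ± v ∈ C}`. -/
noncomputable def ouNorm {V : Type*} [AddCommGroup V] [Module ℝ V]
    (C : Set V) (e : V) (v : V) : ℝ :=
  sInf {a : ℝ | 0 < a ∧ a • e - v ∈ C ∧ a • e + v ∈ C}

/-- A state: a positive linear functional sending `e` to `1`. -/
def IsState {V : Type*} [AddCommGroup V] [Module ℝ V]
    (C : Set V) (e : V) (f : V →ₗ[ℝ] ℝ) : Prop :=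
  (∀ v ∈ C, 0 ≤ f v) ∧ f e = 1

/-- `∞`-orthogonality with respect to the order unit norm. -/
def PerpInf {V : Type*} [AddCommGroup V] [Module ℝ V]
    (C : Set V) (e : V) (x y : V) : Prop :=
  ∀ k : ℝ, ouNorm C e (x + k • y) = max (ouNorm C e x) (ouNorm C e (k • y))

/-- A peripheral element of an order unit space. -/
def Peripheral {V : Type*} [AddCommGroup V] [Module ℝ V]
    (C : Set V) (e : V) (u : V) : Prop :=
  u ∈ C ∧ e - u ∈ C ∧ ouNorm C e u = 1 ∧ ouNorm C e (e - u) = 1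

section OUaux

variable {V : Type*} [AddCommGroup V] [Module ℝ V] {C : Set V} {e : V}

/-- The defining set of the order unit norm. -/
def ouSet (C : Set V) (e : V) (v : V) : Set ℝ :=
  {a : ℝ | 0 < a ∧ a • e - v ∈ C ∧ a • e + v ∈ C}

lemma ouNorm_eq_sInf (v : V) : ouNorm C e v = sInf (ouSet C e v) := rfl

lemma ouSet_nonempty (h : IsOrderUnitSpace C e) (v : V) : (ouSet C e v).Nonempty :=
  h.unit v

lemma ouSet_bddBelow (v : V) : BddBelow (ouSet C e v) :=
  ⟨0, fun _ ha => ha.1.le⟩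

lemma ouNorm_nonneg (h : IsOrderUnitSpace C e) (v : V) : 0 ≤ ouNorm C e v :=
  le_csInf (ouSet_nonempty h v) fun _ ha => ha.1.le

lemma ouNorm_le_of_mem {v : V} {a : ℝ} (ha : a ∈ ouSet C e v) : ouNorm C e v ≤ a :=
  csInf_le (ouSet_bddBelow v) ha

lemma le_ouNorm (h : IsOrderUnitSpace C e) {v : V} {b : ℝ}
    (hb : ∀ a ∈ ouSet C e v, b ≤ a) : b ≤ ouNorm C e v :=
  le_csInf (ouSet_nonempty h v) hb

lemma e_mem_cone (h : IsOrderUnitSpace C e) : e ∈ C := by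
  obtain ⟨a, ha, hm, _⟩ := h.unit (0 : V)
  have h2 := h.smul_mem a⁻¹ (by positivity) _ (show a • e ∈ C by simpa using hm)
  rwa [inv_smul_smul₀ ha.ne'] at h2

lemma ouNorm_attained (h : IsOrderUnitSpace C e) (v : V) :
    ouNorm C e v • e - v ∈ C ∧ ouNorm C e v • e + v ∈ C := by
  set N := ouNorm C e v with hN
  constructor
  · apply h.arch
    intro ε hε
    obtain ⟨a, haS, hlt⟩ := exists_lt_of_csInf_lt (ouSet_nonempty h v)
      (show sInf (ouSet C e v) < N + ε by rw [← ouNorm_eq_sInf, ← hN]; linarith)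
    have hmem := h.smul_mem (N + ε - a) (by linarith) e (e_mem_cone h)
    have hadd := h.add_mem _ hmem _ haS.2.1
    have hid : (N + ε - a) • e + (a • e - v) = ε • e + (N • e - v) := by module
    rwa [hid] at hadd
  · apply h.arch
    intro ε hε
    obtain ⟨a, haS, hlt⟩ := exists_lt_of_csInf_lt (ouSet_nonempty h v)
      (show sInf (ouSet C e v) < N + ε by rw [← ouNorm_eq_sInf, ← hN]; linarith)
    have hmem := h.smul_mem (N + ε - a) (by linarith) e (e_mem_cone h)
    have hadd := h.add_mem _ hmem _ haS.2.2
    have hid : (N + ε - a) • e + (a • e + v) = ε • e + (N • e + v) := by module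
    rwa [hid] at hadd

lemma ouNorm_zero (h : IsOrderUnitSpace C e) : ouNorm C e (0 : V) = 0 := by
  refine le_antisymm ?_ (ouNorm_nonneg h 0)
  by_contra hc
  push_neg at hc
  have : ouNorm C e (0 : V) ≤ ouNorm C e (0 : V) / 2 := by
    apply ouNorm_le_of_mem
    refine ⟨by linarith, ?_, ?_⟩ <;>
      simpa using h.smul_mem _ (by linarith : (0:ℝ) ≤ ouNorm C e (0:V) / 2) e (e_mem_cone h)
  linarith

lemma eq_zero_of_ouNorm_eq_zero (h : IsOrderUnitSpace C e) {v : V}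
    (hv : ouNorm C e v = 0) : v = 0 := by
  obtain ⟨h1, h2⟩ := ouNorm_attained h v
  rw [hv, zero_smul, zero_sub] at h1
  rw [hv, zero_smul, zero_add] at h2
  exact h.proper v h2 h1

lemma ouNorm_pos (h : IsOrderUnitSpace C e) {v : V} (hv : v ≠ 0) :
    0 < ouNorm C e v :=
  (ouNorm_nonneg h v).lt_of_ne fun h0 => hv (eq_zero_of_ouNorm_eq_zero h h0.symm)

lemma ouNorm_smul (h : IsOrderUnitSpace C e) {r : ℝ} (hr : 0 < r) (v : V) :
    ouNorm C e (r • v) = r * ouNorm C e v := by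
  apply le_antisymm
  · have h1 : ouNorm C e (r • v) / r ≤ ouNorm C e v := by
      apply le_ouNorm h
      intro b hb
      have hmem : r * b ∈ ouSet C e (r • v) := by
        refine ⟨mul_pos hr hb.1, ?_, ?_⟩
        · have := h.smul_mem r hr.le _ hb.2.1
          rwa [smul_sub, smul_smul] at this
        · have := h.smul_mem r hr.le _ hb.2.2
          rwa [smul_add, smul_smul] at this
      have := ouNorm_le_of_mem hmem
      rw [div_le_iff₀ hr]
      linarith [mul_comm r b]
    calc ouNorm C e (r • v) = r * (ouNorm C e (r • v) / r) := by field_simp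
      _ ≤ r * ouNorm C e v := by nlinarith
  · apply le_ouNorm h
    intro a ha
    have hmem : r⁻¹ * a ∈ ouSet C e v := by
      refine ⟨mul_pos (inv_pos.mpr hr) ha.1, ?_, ?_⟩
      · have := h.smul_mem r⁻¹ (by positivity) _ ha.2.1
        rwa [smul_sub, smul_smul, smul_smul, inv_mul_cancel₀ hr.ne', one_smul] at this
      · have := h.smul_mem r⁻¹ (by positivity) _ ha.2.2
        rwa [smul_add, smul_smul, smul_smul, inv_mul_cancel₀ hr.ne', one_smul] at this
    have := ouNorm_le_of_mem hmem
    calc r * ouNorm C e v ≤ r * (r⁻¹ * a) := by nlinarith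
      _ = a := by field_simp

lemma e_ne_zero (h : IsOrderUnitSpace C e) (hdim : 2 ≤ Module.rank ℝ V) : e ≠ 0 := by
  intro he
  have hall : ∀ v : V, v = 0 := by
    intro v
    obtain ⟨a, _, hm, hp⟩ := h.unit v
    rw [he, smul_zero] at hm hp
    exact h.proper v (by simpa using hp) (by simpa using hm)
  have : Subsingleton V := subsingleton_of_forall_eq 0 hall
  rw [rank_subsingleton'] at hdim
  exact absurd hdim (by simp)

end OUaux

theorem exists_unique_peripheral_on_line
    {V : Type*} [AddCommGroup V] [Module ℝ V] {C : Set V} {e : V}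
    (h : IsOrderUnitSpace C e) (hdim : 2 ≤ Module.rank ℝ V)
    {u : V} (hu : u ∈ C) (hu1 : ouNorm C e u = 1) (hue : u ≠ e) :
    ((∃ l : ℝ, e - (ouNorm C e (e - u))⁻¹ • (e - u) = e - l • (e - u)) ∧
      e - (ouNorm C e (e - u))⁻¹ • (e - u) ∈ C ∧
      ouNorm C e (e - (ouNorm C e (e - u))⁻¹ • (e - u)) = 1 ∧
      e - (e - (ouNorm C e (e - u))⁻¹ • (e - u)) ∈ C ∧
      ouNorm C e (e - (e - (ouNorm C e (e - u))⁻¹ • (e - u))) = 1) ∧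
    ∀ x : V, ((∃ l : ℝ, x = e - l • (e - u)) ∧ x ∈ C ∧ ouNorm C e x = 1 ∧
        e - x ∈ C ∧ ouNorm C e (e - x) = 1) →
      x = e - (ouNorm C e (e - u))⁻¹ • (e - u) := by
  set w := e - u with hw
  have hwne : w ≠ 0 := sub_ne_zero.mpr (Ne.symm hue)
  have hwC : w ∈ C := by
    have := (ouNorm_attained h u).1
    rwa [hu1, one_smul, ← hw] at this
  set N := ouNorm C e w with hN
  have hNpos : 0 < N := ouNorm_pos h hwne
  have hubarC : e - N⁻¹ • w ∈ C := by
    have := h.smul_mem N⁻¹ (by positivity) _ (ouNorm_attained h w).1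
    rwa [smul_sub, smul_smul, ← hN, inv_mul_cancel₀ hNpos.ne', one_smul] at this
  have hcompl : e - (e - N⁻¹ • w) ∈ C := by
    rw [sub_sub_cancel]
    exact h.smul_mem _ (by positivity) _ hwC
  have hnorm_compl : ouNorm C e (e - (e - N⁻¹ • w)) = 1 := by
    rw [sub_sub_cancel, ouNorm_smul h (by positivity : (0:ℝ) < N⁻¹), ← hN,
      inv_mul_cancel₀ hNpos.ne']
  have hnorm_ubar : ouNorm C e (e - N⁻¹ • w) = 1 := by
    apply le_antisymm
    · apply ouNorm_le_of_mem
      refine ⟨one_pos, ?_, ?_⟩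
      · rw [one_smul, sub_sub_cancel]
        exact h.smul_mem _ (by positivity) _ hwC
      · rw [one_smul]
        exact h.add_mem _ (e_mem_cone h) _ hubarC
    · apply le_ouNorm h
      intro a ha
      by_contra hc
      push_neg at hc
      have key : (1 - N * (1 - a)) • e - u ∈ C := by
        have hmul := h.smul_mem N hNpos.le _ ha.2.1
        have hid : N • (a • e - (e - N⁻¹ • w)) = (N * a - N) • e + (N • (N⁻¹ • w)) := by
          module
        rw [hid, smul_smul, mul_inv_cancel₀ hNpos.ne', one_smul, hw] at hmul
        have hid2 : (N * a - N) • e + (e - u) = (1 - N * (1 - a)) • e - u := by module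
        rwa [hid2] at hmul
      set t := 1 - N * (1 - a) with ht
      have hδ : 0 < N * (1 - a) := by nlinarith
      rcases lt_trichotomy t 0 with h0 | h0 | h0
      · have h2 : t • e ∈ C := by
          have := h.add_mem _ key _ hu
          have hid3 : t • e - u + u = t • e := by abel
          rwa [hid3] at this
        have h3 : -(t • e) ∈ C := by
          have := h.smul_mem (-t) (by linarith) e (e_mem_cone h)
          rwa [neg_smul] at this
        have h4 := h.proper _ h2 h3
        rcases smul_eq_zero.mp h4 with h5 | h5
        · exact absurd h5 (by linarith)
        · exact e_ne_zero h hdim h5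
      · rw [h0, zero_smul, zero_sub] at key
        have hu0 := h.proper u hu key
        rw [hu0, ouNorm_zero h] at hu1
        norm_num at hu1
      · have hmem : t ∈ ouSet C e u := by
          refine ⟨h0, key, ?_⟩
          exact h.add_mem _ (h.smul_mem t h0.le e (e_mem_cone h)) _ hu
        have hle := ouNorm_le_of_mem hmem
        rw [hu1] at hle
        nlinarith
  refine ⟨⟨⟨N⁻¹, rfl⟩, hubarC, hnorm_ubar, hcompl, hnorm_compl⟩, ?_⟩
  rintro x ⟨⟨l, hxl⟩, _, _, hexC, hex1⟩
  have hex : e - x = l • w := by rw [hxl, sub_sub_cancel]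
  rcases le_or_gt l 0 with hl | hl
  · exfalso
    have h1 : l • w ∈ C := hex ▸ hexC
    have h2 : -(l • w) ∈ C := by
      have := h.smul_mem (-l) (by linarith) _ hwC
      rwa [neg_smul] at this
    have h3 := h.proper _ h1 h2
    rw [hex, h3, ouNorm_zero h] at hex1
    norm_num at hex1
  · have hval : ouNorm C e (e - x) = l * N := by rw [hex, ouNorm_smul h hl, hN]
    have hlN : l * N = 1 := by rw [← hval, hex1]
    have hNl : N * l = 1 := by linarith [mul_comm l N]
    rw [hxl, eq_inv_of_mul_eq_one_left hlN]
end
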